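/- arXiv:1302.3032 — 4 statements merged into one kernel-verified Lean document; each statement's English description precedes it below -/
import Mathlib

section
/- A distributive lattice (with 0, not necessarily with top element) is a generalized Boolean algebra if and only if every prime filter is an ultrafilter. -/
/-!
If relative complements exist and `F` is prime, any `g` in a proper filter `G ⊇ F` lies in `F`:
for `f ∈ F` and `c` the complement of `g` in `g ⊔ f`, primeness gives `g ∈ F` or `c ∈ F`, and
the latter would put `g ⊓ c = ⊥` in `G`.

Conversely, if `a ≤ b` has no relative complement, then `b` avoids the ideal generated by `a`
and the elements disjoint from `a`. A prime ideal `Q` separating them has a prime filter `Qᶜ` as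
complement, and `Qᶜ` is not maximal: adjoining `a ∉ Qᶜ` keeps it proper, because every `p` with
`a ⊓ p = ⊥` lies in `Q`.
-/

namespace InvPaper

variable {L : Type*} [DistribLattice L] [OrderBot L]

/-- A filter in a lattice: a nonempty, downward-directed, upward-closed subset. -/
def IsFilterLat (F : Set L) : Prop :=
  F.Nonempty ∧ (∀ a ∈ F, ∀ b ∈ F, ∃ c ∈ F, c ≤ a ∧ c ≤ b) ∧
    ∀ a ∈ F, ∀ b : L, a ≤ b → b ∈ F

/-- A proper filter: one not containing `0 = ⊥`. -/
def IsProperFilterLat (F : Set L) : Prop := IsFilterLat F ∧ (⊥ : L) ∉ F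

/-- An ultrafilter: a maximal proper filter. -/
def IsUltrafilterLat (F : Set L) : Prop :=
  IsProperFilterLat F ∧ ∀ G : Set L, IsProperFilterLat G → F ⊆ G → G = F

/-- A prime filter: a proper filter such that `a ⊔ b ∈ F` implies `a ∈ F` or `b ∈ F`. -/
def IsPrimeFilterLat (F : Set L) : Prop :=
  IsProperFilterLat F ∧ ∀ a b : L, a ⊔ b ∈ F → a ∈ F ∨ b ∈ F

open Order

theorem IsFilterLat.inf_mem {α : Type*} [DistribLattice α] {F : Set α} (hF : IsFilterLat F)
    {a b : α} (ha : a ∈ F) (hb : b ∈ F) : a ⊓ b ∈ F := by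
  obtain ⟨c, hc, hca, hcb⟩ := hF.2.1 a ha b hb
  exact hF.2.2 c hc _ (le_inf hca hcb)

def filterAdjoin (F : Set L) (x : L) : Set L := {y | ∃ m ∈ F, x ⊓ m ≤ y}

theorem IsFilterLat.filterAdjoin {α : Type*} [DistribLattice α] {F : Set α} (hF : IsFilterLat F)
    (x : α) : IsFilterLat (filterAdjoin F x) := by
  obtain ⟨m, hm⟩ := hF.1
  refine ⟨⟨x ⊓ m, m, hm, le_rfl⟩, ?_, ?_⟩
  · rintro p ⟨m₁, hm₁, hp⟩ q ⟨m₂, hm₂, hq⟩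
    refine ⟨x ⊓ (m₁ ⊓ m₂), ⟨_, hF.inf_mem hm₁ hm₂, le_rfl⟩, ?_, ?_⟩
    · exact (inf_le_inf_left x inf_le_left).trans hp
    · exact (inf_le_inf_left x inf_le_right).trans hq
  · rintro p ⟨m, hm, hp⟩ q hpq
    exact ⟨m, hm, hp.trans hpq⟩

theorem IsUltrafilterLat.exists_inf_eq_bot_of_notMem {F : Set L} (hF : IsUltrafilterLat F)
    {x : L} (hx : x ∉ F) : ∃ m ∈ F, x ⊓ m = ⊥ := by
  by_contra! hne
  have hproper : IsProperFilterLat (filterAdjoin F x) :=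
    ⟨hF.1.1.filterAdjoin x, fun ⟨m, hm, hle⟩ => hne m hm (le_bot_iff.mp hle)⟩
  have hsub : F ⊆ filterAdjoin F x := fun m hm => ⟨m, hm, inf_le_right⟩
  obtain ⟨m, hm⟩ := hF.1.1.1
  exact hx (hF.2 _ hproper hsub ▸ ⟨m, hm, inf_le_left⟩)

theorem IsPrimeFilterLat.isUltrafilterLat
    (hcompl : ∀ a b : L, a ≤ b → ∃ c : L, a ⊓ c = ⊥ ∧ a ⊔ c = b) {F : Set L}
    (hF : IsPrimeFilterLat F) : IsUltrafilterLat F := by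
  refine ⟨hF.1, fun G hG hFG => Set.Subset.antisymm (fun g hg => ?_) hFG⟩
  obtain ⟨f, hf⟩ := hF.1.1.1
  obtain ⟨c, hgc, hsup⟩ := hcompl g (g ⊔ f) le_sup_left
  have hgcF : g ⊔ c ∈ F := hF.1.1.2.2 f hf _ (hsup ▸ le_sup_right)
  refine (hF.2 g c hgcF).resolve_right fun hc => hG.2 ?_
  exact hgc ▸ hG.1.inf_mem hg (hFG hc)

def disjointIdeal (a : L) : Ideal L :=
  IsIdeal.toIdeal
    { IsLowerSet := fun _ _ hyx hx => Disjoint.mono_right hyx hx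
      Nonempty := ⟨⊥, disjoint_bot_right⟩
      Directed := fun _ hx _ hy => ⟨_, Disjoint.sup_right hx hy, le_sup_left, le_sup_right⟩ :
      IsIdeal {x : L | Disjoint a x} }

theorem mem_disjointIdeal {a x : L} : x ∈ disjointIdeal a ↔ a ⊓ x = ⊥ := disjoint_iff

theorem exists_relCompl_of_mem_disjointIdeal_sup_principal {a b : L} (hab : a ≤ b)
    (hb : b ∈ disjointIdeal a ⊔ Ideal.principal a) : ∃ c : L, a ⊓ c = ⊥ ∧ a ⊔ c = b := by
  obtain ⟨i, hi, j, hja, hbij⟩ := Ideal.mem_sup.mp hb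
  have hbai : b ≤ a ⊔ i := hbij.trans (sup_comm i j ▸ sup_le_sup_right hja i)
  refine ⟨i ⊓ b, ?_, ?_⟩
  · rw [← inf_assoc, mem_disjointIdeal.mp hi, bot_inf_eq]
  · rw [sup_inf_left, sup_eq_right.mpr hab, inf_eq_right.mpr hbai]

theorem isPrimeFilterLat_compl {Q : Ideal L} (hQ : Q.IsPrime) :
    IsPrimeFilterLat (Q : Set L)ᶜ := by
  refine ⟨⟨⟨hQ.compl_filter.Nonempty, fun x hx y hy => hQ.compl_filter.Directed x hx y hy,
    fun x hx y hxy => Ideal.mem_compl_of_ge hxy hx⟩, not_not.mpr Q.bot_mem⟩, fun x y hxy => ?_⟩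
  by_contra! h
  exact hxy (Ideal.sup_mem (not_not.mp h.1) (not_not.mp h.2))

theorem exists_relCompl_of_forall_isUltrafilterLat
    (hult : ∀ F : Set L, IsPrimeFilterLat F → IsUltrafilterLat F) {a b : L} (hab : a ≤ b) :
    ∃ c : L, a ⊓ c = ⊥ ∧ a ⊔ c = b := by
  by_contra hno
  set J := disjointIdeal a ⊔ Ideal.principal a
  have hbJ : b ∉ J := fun hb => hno (exists_relCompl_of_mem_disjointIdeal_sup_principal hab hb)
  have hdisj : Disjoint (PFilter.principal b : Set L) J :=
    Set.disjoint_left.mpr fun x hbx hxJ => hbJ (J.lower hbx hxJ)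
  obtain ⟨Q, hQ, hJQ, -⟩ := DistribLattice.prime_ideal_of_disjoint_filter_ideal hdisj
  have haQ : a ∈ Q := hJQ (le_sup_right (a := disjointIdeal a) Ideal.mem_principal_self)
  obtain ⟨p, hpQ, hap⟩ :=
    (hult _ (isPrimeFilterLat_compl hQ)).exists_inf_eq_bot_of_notMem (not_not.mpr haQ)
  exact hpQ (hJQ (le_sup_left (b := Ideal.principal a) (mem_disjointIdeal.mpr hap)))

/-- A distributive lattice with 0 is a generalized Boolean algebra
(relative complements exist) iff every prime filter is an ultrafilter. -/
theorem stmt3 :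
    (∀ a b : L, a ≤ b → ∃ c : L, a ⊓ c = ⊥ ∧ a ⊔ c = b) ↔
      ∀ F : Set L, IsPrimeFilterLat F → IsUltrafilterLat F :=
  ⟨fun hcompl _ hF => hF.isUltrafilterLat hcompl,
    fun hult _ _ hab => exists_relCompl_of_forall_isUltrafilterLat hult hab⟩

end InvPaper
end

section
/- Let S be a distributive inverse semigroup and let c, a, b ∈ S be such that a ∨ b exists (a and b are compatible) and c ∧ (a ∨ b) exists. Then c ∧ a and c ∧ b both exist, the join (c ∧ a) ∨ (c ∧ b) exists, and c ∧ (a ∨ b) = (c ∧ a) ∨ (c ∧ b). -/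
namespace InvPaper

/-- An inverse semigroup: a regular semigroup whose idempotents commute
(equivalently, each element has a unique generalized inverse `sinv`). -/
class InverseSemigroup (S : Type*) extends Semigroup S where
  sinv : S → S
  mul_sinv_mul : ∀ a : S, a * sinv a * a = a
  sinv_mul_sinv : ∀ a : S, sinv a * a * sinv a = sinv a
  idem_comm : ∀ e f : S, e * e = e → f * f = f → e * f = f * e

open InverseSemigroup

variable {S : Type*}

section Basic
variable [InverseSemigroup S]

/-- `e` is an idempotent. -/
def idem (e : S) : Prop := e * e = e

/-- The natural partial order: `a ≤ b` iff `a = b * e` for some idempotent `e`. -/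
def nle (a b : S) : Prop := ∃ e : S, idem e ∧ a = b * e

/-- `s` and `t` are compatible: `s⁻¹t` and `st⁻¹` are idempotents. -/
def compatible (s t : S) : Prop := idem (sinv s * t) ∧ idem (s * sinv t)

/-- `j` is the join (least upper bound) of `a` and `b` w.r.t. the natural partial order. -/
def isJoin (a b j : S) : Prop :=
  nle a j ∧ nle b j ∧ ∀ c : S, nle a c → nle b c → nle j c

/-- `m` is the meet (greatest lower bound) of `a` and `b`. -/
def isMeet (a b m : S) : Prop :=
  nle m a ∧ nle m b ∧ ∀ z : S, nle z a → nle z b → nle z m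

/-- `j` is the least upper bound of the set `A`. -/
def isJoinSet (A : Set S) (j : S) : Prop :=
  (∀ a ∈ A, nle a j) ∧ ∀ c : S, (∀ a ∈ A, nle a c) → nle j c

/-- A filter: a nonempty, downward-directed, upward-closed subset. -/
def IsFilter (F : Set S) : Prop :=
  F.Nonempty ∧ (∀ a ∈ F, ∀ b ∈ F, ∃ c ∈ F, nle c a ∧ nle c b) ∧
    ∀ a ∈ F, ∀ b : S, nle a b → b ∈ F

/-- An order ideal: a downward-closed subset. -/
def IsOrderIdeal (A : Set S) : Prop := ∀ x ∈ A, ∀ y : S, nle y x → y ∈ A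

end Basic

/-- An inverse semigroup with a (multiplicative) zero element. -/
class InverseSemigroupWithZero (S : Type*) extends InverseSemigroup S, Zero S where
  zmul : ∀ a : S, 0 * a = 0
  mulz : ∀ a : S, a * 0 = 0

section WithZero
variable [InverseSemigroupWithZero S]

/-- A proper filter: a filter not containing `0`. -/
def IsProperFilter (F : Set S) : Prop := IsFilter F ∧ (0 : S) ∉ F

/-- An ultrafilter: a maximal proper filter. -/
def IsUltrafilter (F : Set S) : Prop :=
  IsProperFilter F ∧ ∀ G : Set S, IsProperFilter G → F ⊆ G → G = F

/-- A prime filter: a proper filter `F` such that whenever a join `a ∨ b` exists and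
lies in `F`, then `a ∈ F` or `b ∈ F`. -/
def IsPrimeFilter (F : Set S) : Prop :=
  IsProperFilter F ∧ ∀ a b j : S, isJoin a b j → j ∈ F → a ∈ F ∨ b ∈ F

/-- `d(F) = (F⁻¹F)↑`, the upward closure of `{a⁻¹b : a, b ∈ F}`. -/
def dClosure (F : Set S) : Set S :=
  {x | ∃ a ∈ F, ∃ b ∈ F, nle (InverseSemigroup.sinv a * b) x}

/-- `r(F) = (FF⁻¹)↑`, the upward closure of `{ab⁻¹ : a, b ∈ F}`. -/
def rClosure (F : Set S) : Set S :=
  {x | ∃ a ∈ F, ∃ b ∈ F, nle (a * InverseSemigroup.sinv b) x}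

/-- The product of two filters: `F · G = (FG)↑`. -/
def filterMul (F G : Set S) : Set S :=
  {x | ∃ a ∈ F, ∃ b ∈ G, nle (a * b) x}

/-- `A` is ∨-closed: closed under existing joins of finite nonempty compatible subsets. -/
def IsVeeClosed (A : Set S) : Prop :=
  ∀ Y : Finset S, Y.Nonempty → ↑Y ⊆ A → (∀ a ∈ Y, ∀ b ∈ Y, compatible a b) →
    ∀ j : S, isJoinSet (↑Y : Set S) j → j ∈ A

/-- The ∨-closure `A^∨`: all existing joins of finite nonempty compatible subsets of `A`. -/
def veeClosure (A : Set S) : Set S :=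
  {x | ∃ Y : Finset S, Y.Nonempty ∧ ↑Y ⊆ A ∧ (∀ a ∈ Y, ∀ b ∈ Y, compatible a b) ∧
    isJoinSet (↑Y : Set S) x}

/-- A prime order ideal: if every common lower bound of `a` and `b` lies in `P`,
then `a ∈ P` or `b ∈ P`. -/
def IsPrimeOrderIdeal (P : Set S) : Prop :=
  ∀ a b : S, (∀ z : S, nle z a → nle z b → z ∈ P) → a ∈ P ∨ b ∈ P

/-- The set of prime filters containing `s`. -/
def Xset (s : S) : Set (Set S) := {F | IsPrimeFilter F ∧ s ∈ F}

end WithZero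

/-- A distributive inverse semigroup: compatible pairs have joins and
multiplication distributes over these joins. -/
class DistributiveInverseSemigroup (S : Type*) extends InverseSemigroupWithZero S where
  joins_exist : ∀ a b : S, compatible a b → ∃ j : S, isJoin a b j
  mul_distrib_left : ∀ a b j c : S, compatible a b → isJoin a b j →
    isJoin (c * a) (c * b) (c * j)
  mul_distrib_right : ∀ a b j c : S, compatible a b → isJoin a b j →
    isJoin (a * c) (b * c) (j * c)

/-- A distributive inverse semigroup is Boolean if its idempotents form a generalized
Boolean algebra: relative complements of idempotents exist. -/
def IsBoolean (S : Type*) [DistributiveInverseSemigroup S] : Prop :=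
  ∀ e f : S, idem e → idem f → nle e f →
    ∃ g : S, idem g ∧ e * g = 0 ∧ isJoin e g f

/-- A pseudogroup: an inverse semigroup with joins of all nonempty compatible subsets,
over which multiplication distributes. -/
class Pseudogroup (S : Type*) extends InverseSemigroup S where
  joins_exist : ∀ A : Set S, A.Nonempty → (∀ a ∈ A, ∀ b ∈ A, compatible a b) →
    ∃ j : S, isJoinSet A j
  mul_distrib_left : ∀ (A : Set S) (j c : S), isJoinSet A j →
    isJoinSet ((c * ·) '' A) (c * j)
  mul_distrib_right : ∀ (A : Set S) (j c : S), isJoinSet A j →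
    isJoinSet ((· * c) '' A) (j * c)

/-!
Since `m ≤ j = a ∨ b`, we have `m = (m j⁻¹) j`, so distributivity gives
`m = m j⁻¹ a ∨ m j⁻¹ b`. Below `j`, any two elements `x, y` have the meet `x j⁻¹ y`;
hence `m j⁻¹ a = m ∧ a`, which equals `c ∧ a` because `m = c ∧ j` and `a ≤ j`.
-/

section NaturalOrder
variable [InverseSemigroup S]

theorem idem_mul {e f : S} (he : idem e) (hf : idem f) : idem (e * f) := by
  unfold idem at *
  calc e * f * (e * f) = e * (f * e) * f := by simp only [mul_assoc]
    _ = e * (e * f) * f := by rw [idem_comm f e hf he]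
    _ = (e * e) * (f * f) := by simp only [mul_assoc]
    _ = e * f := by rw [he, hf]

theorem idem_sinv_mul_self (x : S) : idem (sinv x * x) := by
  unfold idem
  rw [← mul_assoc, sinv_mul_sinv]

theorem nle_trans {x y z : S} (hxy : nle x y) (hyz : nle y z) : nle x z := by
  obtain ⟨e, he, rfl⟩ := hxy
  obtain ⟨f, hf, rfl⟩ := hyz
  exact ⟨f * e, idem_mul hf he, mul_assoc z f e⟩

theorem idem_sinv_mul_of_nle {x j : S} (h : nle x j) : idem (sinv j * x) := by
  obtain ⟨e, he, rfl⟩ := h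
  rw [← mul_assoc]
  exact idem_mul (idem_sinv_mul_self j) he

theorem mul_sinv_cancel_left_of_nle {x j : S} (h : nle x j) : j * (sinv j * x) = x := by
  obtain ⟨e, -, rfl⟩ := h
  rw [← mul_assoc, ← mul_assoc, mul_sinv_mul]

theorem sinv_mul_cancel_right_of_nle {x j : S} (h : nle x j) : x * sinv j * j = x := by
  obtain ⟨e, he, rfl⟩ := h
  calc j * e * sinv j * j = j * (e * (sinv j * j)) := by simp only [mul_assoc]
    _ = j * (sinv j * j * e) := by rw [idem_comm _ _ he (idem_sinv_mul_self j)]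
    _ = j * e := by rw [← mul_assoc, ← mul_assoc, mul_sinv_mul]

theorem sinv_mul_mul_sinv_mul_of_nle {x z j : S} (hzx : nle z x) (hx : nle x j) :
    sinv j * x * (sinv j * z) = sinv j * z := by
  obtain ⟨g, -, rfl⟩ := hzx
  have he : idem (sinv j * x) := idem_sinv_mul_of_nle hx
  calc sinv j * x * (sinv j * (x * g)) = (sinv j * x * (sinv j * x)) * g := by
        simp only [mul_assoc]
    _ = sinv j * (x * g) := by rw [he, mul_assoc]

-- `x ↦ j⁻¹x` embeds the elements below `j` order-isomorphically into the idempotents,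
-- where meets are products; pulling back gives `x ∧ y = j (j⁻¹x)(j⁻¹y)`.
theorem isMeet_of_nle {x y j : S} (hx : nle x j) (hy : nle y j) :
    isMeet x y (x * (sinv j * y)) := by
  have hxj := mul_sinv_cancel_left_of_nle hx
  have hyj := mul_sinv_cancel_left_of_nle hy
  refine ⟨⟨_, idem_sinv_mul_of_nle hy, rfl⟩, ⟨_, idem_sinv_mul_of_nle hx, ?_⟩, ?_⟩
  · calc x * (sinv j * y) = j * ((sinv j * x) * (sinv j * y)) := by
          rw [← mul_assoc j, hxj]
      _ = j * ((sinv j * y) * (sinv j * x)) := by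
          rw [idem_comm _ _ (idem_sinv_mul_of_nle hx) (idem_sinv_mul_of_nle hy)]
      _ = y * (sinv j * x) := by rw [← mul_assoc j, hyj]
  · intro z hzx hzy
    refine ⟨_, idem_sinv_mul_of_nle (nle_trans hzx hx), ?_⟩
    calc z = j * (sinv j * z) := (mul_sinv_cancel_left_of_nle (nle_trans hzx hx)).symm
      _ = j * (sinv j * x) * ((sinv j * y) * (sinv j * z)) := by
          rw [sinv_mul_mul_sinv_mul_of_nle hzy hy, mul_assoc,
            sinv_mul_mul_sinv_mul_of_nle hzx hx]
      _ = x * (sinv j * y) * (sinv j * z) := by rw [hxj, ← mul_assoc x]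

theorem isMeet_of_isMeet_of_nle {a c j m ma : S} (hm : isMeet c j m) (ha : nle a j)
    (hma : isMeet m a ma) : isMeet c a ma :=
  ⟨nle_trans hma.1 hm.1, hma.2.1,
    fun z hzc hza => hma.2.2 z (hm.2.2 z hzc (nle_trans hza ha)) hza⟩

end NaturalOrder

/-- In a distributive inverse semigroup, if `a ∨ b` exists and
`c ∧ (a ∨ b)` exists, then `c ∧ a` and `c ∧ b` exist, their join exists and equals
`c ∧ (a ∨ b)`. -/
theorem stmt4 {S : Type*} [DistributiveInverseSemigroup S] (a b c j m : S)
    (hab : compatible a b) (hj : isJoin a b j) (hm : isMeet c j m) :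
    ∃ ma mb : S, isMeet c a ma ∧ isMeet c b mb ∧ isJoin ma mb m := by
  have hmj : nle m j := hm.2.1
  have hjoin := DistributiveInverseSemigroup.mul_distrib_left a b j (m * sinv j) hab hj
  rw [sinv_mul_cancel_right_of_nle hmj, mul_assoc, mul_assoc] at hjoin
  exact ⟨_, _, isMeet_of_isMeet_of_nle hm hj.1 (isMeet_of_nle hmj hj.1),
    isMeet_of_isMeet_of_nle hm hj.2.1 (isMeet_of_nle hmj hj.2.1), hjoin⟩

end InvPaper
end

section
/- A distributive inverse semigroup S is Boolean if and only if every prime filter in S is an ultrafilter. -/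
namespace InvPaper

open InverseSemigroup

variable {S : Type*}

/-!
The idempotents of `S` form a distributive lattice with zero (meets are products, joins are
joins in `S`), and `S` is Boolean exactly when this lattice is relatively complemented.

If it is, let `F` be a prime filter and `G ⊇ F` a proper filter containing `a`; pick `b ∈ F` and
`c ∈ G` with `c ≤ a, b`, and let `k` complement `c⁻¹c` below `b⁻¹b`. Then `b = c ∨ bk`, so `c ∈ F`
or `bk ∈ F`; but `c` and `bk` have disjoint domains, so no proper filter contains both.

If instead `e ≤ f` has no relative complement, the elements below some `e ∨ g` with `eg = 0`
form an ideal of idempotents missing `f`; the prime ideal theorem enlarges it to a prime ideal `P`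
still missing `f`. The complement of `P` generates a prime filter of `S` that does not contain `e`,
yet it lies in the proper filter generated by `{me : m ∉ P}`, which does.
-/

section Semigroup
variable [InverseSemigroup S]

theorem idem_sinv_mul (a : S) : idem (sinv a * a) := by
  rw [idem, show sinv a * a * (sinv a * a) = sinv a * (a * sinv a * a) by simp only [mul_assoc],
    mul_sinv_mul]

theorem idem_mul_sinv (a : S) : idem (a * sinv a) := by
  rw [idem, show a * sinv a * (a * sinv a) = a * sinv a * a * sinv a by simp only [mul_assoc],
    mul_sinv_mul]

theorem sinv_eq_of_mul_mul {a x : S} (h₁ : a * x * a = a) (h₂ : x * a * x = x) : sinv a = x := by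
  set y := sinv a
  have idem_right {z : S} (hz : a * z * a = a) : idem (z * a) := by
    rw [idem, show z * a * (z * a) = z * (a * z * a) by simp only [mul_assoc], hz]
  have idem_left {z : S} (hz : a * z * a = a) : idem (a * z) := by
    rw [idem, show a * z * (a * z) = a * z * a * z by simp only [mul_assoc], hz]
  have hy : a * y * a = a := mul_sinv_mul a
  have hx : x = y * a * x :=
    calc x = x * (a * y * a) * x := by rw [hy, h₂]
      _ = y * a * (x * a) * x := by
          rw [show x * (a * y * a) = x * a * (y * a) by simp only [mul_assoc],
            idem_comm _ _ (idem_right h₁) (idem_right hy)]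
      _ = y * a * x := by rw [mul_assoc (y * a), h₂]
  have hy' : y = y * a * x :=
    calc y = y * (a * x * a) * y := by rw [h₁, sinv_mul_sinv]
      _ = y * (a * y) * (a * x) := by
          rw [show y * (a * x * a) * y = y * ((a * x) * (a * y)) by simp only [mul_assoc],
            idem_comm _ _ (idem_left h₁) (idem_left hy)]
          simp only [mul_assoc]
      _ = y * a * x := by rw [← mul_assoc y a y, sinv_mul_sinv, mul_assoc]
  rw [hx, ← hy']

theorem sinv_eq_self_of_idem {e : S} (he : idem e) : sinv e = e :=
  sinv_eq_of_mul_mul (by rw [he, he]) (by rw [he, he])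

theorem sinv_sinv (a : S) : sinv (sinv a) = a :=
  sinv_eq_of_mul_mul (sinv_mul_sinv a) (mul_sinv_mul a)

theorem sinv_mul_rev (a b : S) : sinv (a * b) = sinv b * sinv a := by
  refine sinv_eq_of_mul_mul ?_ ?_
  · calc a * b * (sinv b * sinv a) * (a * b)
        = a * ((b * sinv b) * (sinv a * a)) * b := by simp only [mul_assoc]
      _ = (a * sinv a * a) * (b * sinv b * b) := by
          rw [idem_comm _ _ (idem_mul_sinv b) (idem_sinv_mul a)]; simp only [mul_assoc]
      _ = a * b := by rw [mul_sinv_mul, mul_sinv_mul]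
  · calc sinv b * sinv a * (a * b) * (sinv b * sinv a)
        = sinv b * ((sinv a * a) * (b * sinv b)) * sinv a := by simp only [mul_assoc]
      _ = (sinv b * b * sinv b) * (sinv a * a * sinv a) := by
          rw [idem_comm _ _ (idem_sinv_mul a) (idem_mul_sinv b)]; simp only [mul_assoc]
      _ = sinv b * sinv a := by rw [sinv_mul_sinv, sinv_mul_sinv]

theorem idem_sinv_mul_mul {e : S} (c : S) (he : idem e) : idem (sinv c * e * c) :=
  calc sinv c * e * c * (sinv c * e * c)
      = sinv c * (e * (c * sinv c)) * e * c := by simp only [mul_assoc]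
    _ = (sinv c * c * sinv c) * (e * e) * c := by
        rw [idem_comm _ _ he (idem_mul_sinv c)]; simp only [mul_assoc]
    _ = sinv c * e * c := by rw [sinv_mul_sinv, he]

theorem nle_refl (a : S) : nle a a :=
  ⟨sinv a * a, idem_sinv_mul a, by rw [← mul_assoc, mul_sinv_mul]⟩

theorem nle_trans_s8 {a b c : S} (hab : nle a b) (hbc : nle b c) : nle a c := by
  obtain ⟨e, he, rfl⟩ := hab
  obtain ⟨f, hf, rfl⟩ := hbc
  exact ⟨f * e, idem_mul hf he, by rw [mul_assoc]⟩

theorem nle_antisymm {a b : S} (hab : nle a b) (hba : nle b a) : a = b := by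
  obtain ⟨e, he, hae⟩ := hab
  obtain ⟨i, hi, hbi⟩ := hba
  have hb : b = b * (e * i) := by rw [← mul_assoc, ← hae, ← hbi]
  have hbe : b * e = b :=
    calc b * e = b * (e * i) * e := by rw [← hb]
      _ = b * (e * e * i) := by rw [mul_assoc, mul_assoc, idem_comm i e hi he, ← mul_assoc e]
      _ = b := by rw [he, ← hb]
  rw [hae, hbe]

theorem mul_nle_self_of_idem (a : S) {e : S} (he : idem e) : nle (a * e) a := ⟨e, he, rfl⟩

theorem nle_mul_left {a b : S} (c : S) (h : nle a b) : nle (c * a) (c * b) := by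
  obtain ⟨e, he, rfl⟩ := h
  exact ⟨e, he, by rw [mul_assoc]⟩

theorem nle_mul_right {a b : S} (c : S) (h : nle a b) : nle (a * c) (b * c) := by
  obtain ⟨e, he, rfl⟩ := h
  refine ⟨sinv c * e * c, idem_sinv_mul_mul c he, ?_⟩
  calc b * e * c = (b * e) * (c * sinv c * c) := by rw [mul_sinv_mul]
    _ = b * (e * (c * sinv c)) * c := by simp only [mul_assoc]
    _ = b * c * (sinv c * e * c) := by
        rw [idem_comm _ _ he (idem_mul_sinv c)]; simp only [mul_assoc]

theorem nle_mul {a b c d : S} (hab : nle a b) (hcd : nle c d) : nle (a * c) (b * d) :=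
  nle_trans_s8 (nle_mul_left a hcd) (nle_mul_right d hab)

theorem nle_sinv {a b : S} (h : nle a b) : nle (sinv a) (sinv b) := by
  obtain ⟨e, he, rfl⟩ := h
  rw [sinv_mul_rev, sinv_eq_self_of_idem he]
  refine ⟨b * e * sinv b, by simpa only [sinv_sinv] using idem_sinv_mul_mul (sinv b) he, ?_⟩
  calc e * sinv b = e * (sinv b * b) * sinv b := by rw [mul_assoc, sinv_mul_sinv]
    _ = sinv b * (b * e * sinv b) := by
        rw [idem_comm _ _ he (idem_sinv_mul b)]; simp only [mul_assoc]

theorem eq_mul_sinv_mul_of_nle {a b : S} (h : nle a b) : a = b * (sinv a * a) := by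
  obtain ⟨e, he, rfl⟩ := h
  rw [sinv_mul_rev, sinv_eq_self_of_idem he]
  calc b * e = (b * sinv b * b) * (e * e) := by rw [mul_sinv_mul, he]
    _ = b * (e * (sinv b * b) * e) := by
        rw [idem_comm _ _ he (idem_sinv_mul b)]; simp only [mul_assoc]
    _ = b * (e * sinv b * (b * e)) := by simp only [mul_assoc]

theorem idem_of_nle_idem {a e : S} (he : idem e) (h : nle a e) : idem a := by
  obtain ⟨i, hi, rfl⟩ := h
  exact idem_mul he hi

theorem mul_eq_left_of_nle_idem {e f : S} (hf : idem f) (h : nle e f) : e * f = e := by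
  obtain ⟨i, hi, rfl⟩ := h
  rw [mul_assoc, idem_comm i f hi hf, ← mul_assoc, hf]

theorem mul_eq_right_of_idem_nle {e j : S} (he : idem e) (h : nle e j) : j * e = e := by
  have := (eq_mul_sinv_mul_of_nle h).symm
  rwa [sinv_eq_self_of_idem he, he] at this

theorem compatible_of_idem {e f : S} (he : idem e) (hf : idem f) : compatible e f :=
  ⟨by rw [sinv_eq_self_of_idem he]; exact idem_mul he hf,
    by rw [sinv_eq_self_of_idem hf]; exact idem_mul he hf⟩

theorem compatible_of_nle_of_nle {a b j : S} (ha : nle a j) (hb : nle b j) : compatible a b := by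
  obtain ⟨e, he, rfl⟩ := ha
  obtain ⟨i, hi, rfl⟩ := hb
  constructor
  · rw [sinv_mul_rev, sinv_eq_self_of_idem he,
      show e * sinv j * (j * i) = e * (sinv j * j) * i by simp only [mul_assoc]]
    exact idem_mul (idem_mul he (idem_sinv_mul j)) hi
  · rw [sinv_mul_rev, sinv_eq_self_of_idem hi,
      show j * e * (i * sinv j) = sinv (sinv j) * (e * i) * sinv j by
        rw [sinv_sinv]; simp only [mul_assoc]]
    exact idem_sinv_mul_mul (sinv j) (idem_mul he hi)

theorem isJoin_unique {a b j j' : S} (h : isJoin a b j) (h' : isJoin a b j') : j = j' :=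
  nle_antisymm (h.2.2 j' h'.1 h'.2.1) (h'.2.2 j h.1 h.2.1)

theorem idem_of_isJoin {e f j : S} (he : idem e) (hf : idem f) (h : isJoin e f j) : idem j := by
  have below_dom {i : S} (hi : idem i) (hij : nle i j) : nle i (sinv j * j) := by
    have := nle_mul (nle_sinv hij) hij
    rwa [sinv_eq_self_of_idem hi, show i * i = i from hi] at this
  exact idem_of_nle_idem (idem_sinv_mul j) (h.2.2 _ (below_dom he h.1) (below_dom hf h.2.1))

end Semigroup

abbrev Idempotents (S : Type*) [InverseSemigroup S] := {e : S // idem e}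

section Idempotents
variable [InverseSemigroup S]

instance : SemilatticeInf (Idempotents S) where
  le e f := nle (e : S) f
  le_refl e := nle_refl (e : S)
  le_trans _ _ _ := nle_trans_s8
  le_antisymm _ _ h h' := Subtype.ext (nle_antisymm h h')
  inf e f := ⟨e * f, idem_mul e.2 f.2⟩
  inf_le_left e f := mul_nle_self_of_idem (e : S) f.2
  inf_le_right e f := by
    change nle ((e : S) * f) f
    rw [idem_comm _ _ e.2 f.2]
    exact mul_nle_self_of_idem (f : S) e.2
  le_inf e f g (hf : nle (e : S) f) (hg : nle (e : S) g) := by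
    refine ⟨e, e.2, ?_⟩
    change (e : S) = f * g * e
    rw [mul_assoc, idem_comm _ _ g.2 e.2, mul_eq_left_of_nle_idem g.2 hg, idem_comm _ _ f.2 e.2,
      mul_eq_left_of_nle_idem f.2 hf]

def dom (a : S) : Idempotents S := ⟨sinv a * a, idem_sinv_mul a⟩

theorem mul_dom (a : S) : a * (dom a : S) = a := by
  rw [dom, ← mul_assoc, mul_sinv_mul]

theorem dom_mono {a b : S} (h : nle a b) : dom a ≤ dom b :=
  nle_mul (nle_sinv h) h

theorem mul_dom_of_nle {a b : S} (h : nle a b) : b * (dom a : S) = a :=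
  (eq_mul_sinv_mul_of_nle h).symm

theorem dom_mul_idem (a : S) (k : Idempotents S) : dom (a * k) = dom a ⊓ k := by
  refine Subtype.ext ?_
  change sinv (a * k) * (a * k) = sinv a * a * k
  rw [sinv_mul_rev, sinv_eq_self_of_idem k.2,
    show (k : S) * sinv a * (a * k) = k * (sinv a * a) * k by simp only [mul_assoc],
    idem_comm _ _ k.2 (idem_sinv_mul a), mul_assoc, k.2]

def upClosure (M : Set (Idempotents S)) : Set S :=
  {s | ∃ m ∈ M, nle (m : S) s}

theorem isFilter_upClosure {M : Set (Idempotents S)} (hne : M.Nonempty)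
    (hinf : ∀ m ∈ M, ∀ n ∈ M, m ⊓ n ∈ M) : IsFilter (upClosure M) := by
  obtain ⟨m, hm⟩ := hne
  refine ⟨⟨m, m, hm, nle_refl _⟩, ?_, ?_⟩
  · rintro a ⟨m, hm, hma⟩ b ⟨n, hn, hnb⟩
    exact ⟨↑(m ⊓ n), ⟨m ⊓ n, hinf m hm n hn, nle_refl _⟩,
      nle_trans_s8 (inf_le_left : m ⊓ n ≤ m) hma, nle_trans_s8 (inf_le_right : m ⊓ n ≤ n) hnb⟩
  · rintro a ⟨m, hm, hma⟩ b hab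
    exact ⟨m, hm, nle_trans_s8 hma hab⟩

end Idempotents

section WithZero
variable [InverseSemigroupWithZero S]

theorem idem_zero : idem (0 : S) := InverseSemigroupWithZero.zmul 0

theorem zero_nle (a : S) : nle 0 a := ⟨0, idem_zero, (InverseSemigroupWithZero.mulz a).symm⟩

theorem eq_zero_of_nle_zero {a : S} (h : nle a 0) : a = 0 := by
  obtain ⟨e, -, rfl⟩ := h
  exact InverseSemigroupWithZero.zmul e

instance : OrderBot (Idempotents S) where
  bot := ⟨0, idem_zero⟩
  bot_le e := zero_nle (e : S)

theorem eq_zero_of_nle_of_nle_of_disjoint {d a b : S} (ha : nle d a) (hb : nle d b)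
    (h : Disjoint (dom a) (dom b)) : d = 0 := by
  have hd : dom d = ⊥ := le_bot_iff.1 (h.le_bot.trans' (le_inf (dom_mono ha) (dom_mono hb)))
  rw [← mul_dom d, hd]
  exact InverseSemigroupWithZero.mulz d

theorem zero_notMem_upClosure {M : Set (Idempotents S)} (h : ⊥ ∉ M) :
    (0 : S) ∉ upClosure M := by
  rintro ⟨m, hm, hm0⟩
  exact h ((Subtype.ext (eq_zero_of_nle_zero hm0) : m = ⊥) ▸ hm)

end WithZero

theorem exists_isPrime_of_no_relCompl {α : Type*} [DistribLattice α] [OrderBot α] {e f : α}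
    (hef : e ≤ f) (hno : ∀ g, Disjoint e g → e ⊔ g ≠ f) :
    ∃ P : Order.Ideal α, P.IsPrime ∧ e ∈ P ∧ f ∉ P ∧ ∀ m ∉ P, ¬Disjoint e m := by
  let J : Set α := {y | ∃ g, Disjoint e g ∧ y ≤ e ⊔ g}
  have hJ : Order.IsIdeal J := by
    refine ⟨fun _ _ hzy ⟨g, hg, hy⟩ => ⟨g, hg, hzy.trans hy⟩,
      ⟨e, ⊥, disjoint_bot_right, le_sup_left⟩, ?_⟩
    rintro _ ⟨g, hg, hy⟩ _ ⟨g', hg', hz⟩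
    exact ⟨e ⊔ (g ⊔ g'), ⟨g ⊔ g', hg.sup_right hg', le_rfl⟩,
      hy.trans (sup_le_sup_left le_sup_left e), hz.trans (sup_le_sup_left le_sup_right e)⟩
  -- `f ≤ e ⊔ g` with `e ⊓ g = ⊥` would make `f ⊓ g` a complement of `e` below `f`
  have hfJ : Disjoint (Order.PFilter.principal f : Set α) J := by
    refine Set.disjoint_left.2 fun y (hfy : f ≤ y) ⟨g, hg, hy⟩ => hno (f ⊓ g)
      (hg.mono_right inf_le_right) ?_
    rw [sup_inf_left, sup_eq_right.2 hef, inf_eq_left.2 (hfy.trans hy)]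
  obtain ⟨P, hP, hJP, hfP⟩ := DistribLattice.prime_ideal_of_disjoint_filter_ideal
    (I := hJ.toIdeal) hfJ
  refine ⟨P, hP, hJP ⟨⊥, disjoint_bot_right, le_sup_left⟩,
    Set.disjoint_left.1 hfP (Order.PFilter.mem_principal.2 le_rfl),
    fun m hm hem => hm (hJP ⟨m, hem, le_sup_right⟩)⟩

section Distributive
variable [DistributiveInverseSemigroup S]

theorem exists_isJoin_of_idem (e f : Idempotents S) : ∃ j : S, isJoin (e : S) f j :=
  DistributiveInverseSemigroup.joins_exist _ _ (compatible_of_idem e.2 f.2)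

noncomputable instance : Lattice (Idempotents S) where
  sup e f := ⟨(exists_isJoin_of_idem e f).choose,
    idem_of_isJoin e.2 f.2 (exists_isJoin_of_idem e f).choose_spec⟩
  le_sup_left e f := (exists_isJoin_of_idem e f).choose_spec.1
  le_sup_right e f := (exists_isJoin_of_idem e f).choose_spec.2.1
  sup_le e f g := (exists_isJoin_of_idem e f).choose_spec.2.2 g

theorem isJoin_sup (e f : Idempotents S) : isJoin (e : S) f ↑(e ⊔ f) :=
  (exists_isJoin_of_idem e f).choose_spec

noncomputable instance : DistribLattice (Idempotents S) :=
  DistribLattice.ofInfSupLe fun a b c =>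
    (DistributiveInverseSemigroup.mul_distrib_left _ _ _ (a : S) (compatible_of_idem b.2 c.2)
      (isJoin_sup b c)).2.2 _ (isJoin_sup (a ⊓ b) (a ⊓ c)).1 (isJoin_sup (a ⊓ b) (a ⊓ c)).2.1

theorem isJoin_iff_sup_eq {e f j : Idempotents S} : isJoin (e : S) f j ↔ e ⊔ f = j :=
  ⟨fun h => Subtype.ext (isJoin_unique (isJoin_sup e f) h), fun h => h ▸ isJoin_sup e f⟩

theorem isBoolean_iff :
    IsBoolean S ↔ ∀ e f : Idempotents S, e ≤ f → ∃ g, Disjoint e g ∧ e ⊔ g = f := by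
  constructor
  · intro hB e f hef
    obtain ⟨g, hg, heg, hsup⟩ := hB e f e.2 f.2 hef
    exact ⟨⟨g, hg⟩, disjoint_iff.2 (Subtype.ext heg), isJoin_iff_sup_eq.1 hsup⟩
  · intro hB e f he hf hef
    obtain ⟨g, heg, hsup⟩ := hB ⟨e, he⟩ ⟨f, hf⟩ hef
    exact ⟨g, g.2, congrArg Subtype.val (disjoint_iff.1 heg), isJoin_iff_sup_eq.2 hsup⟩

theorem IsPrimeFilter.isUltrafilter (hB : IsBoolean S) {F : Set S} (hF : IsPrimeFilter F) :
    IsUltrafilter F := by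
  obtain ⟨hFp, hprime⟩ := hF
  refine ⟨hFp, fun G hG hFG => Set.Subset.antisymm (fun a ha => ?_) hFG⟩
  obtain ⟨⟨⟨b, hb⟩, -, hFup⟩, -⟩ := hFp
  obtain ⟨⟨-, hGdir, -⟩, hG0⟩ := hG
  obtain ⟨c, hc, hca, hcb⟩ := hGdir a ha b (hFG hb)
  obtain ⟨k, hck, hsup⟩ := isBoolean_iff.1 hB (dom c) (dom b) (dom_mono hcb)
  have hjoin : isJoin c (b * k) b := by
    have := DistributiveInverseSemigroup.mul_distrib_left _ _ _ b
      (compatible_of_idem (dom c).2 k.2) (isJoin_iff_sup_eq.2 hsup)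
    rwa [mul_dom_of_nle hcb, mul_dom] at this
  rcases hprime c (b * k) b hjoin hb with hcF | hbkF
  · exact hFup c hcF a hca
  · obtain ⟨d, hd, hdc, hdbk⟩ := hGdir c hc _ (hFG hbkF)
    have hdisj : Disjoint (dom c) (dom (b * k)) := by
      rw [dom_mul_idem]
      exact hck.mono_right inf_le_right
    exact absurd (eq_zero_of_nle_of_nle_of_disjoint hdc hdbk hdisj ▸ hd) hG0

theorem isJoin_mul_of_idem_nle {a b j m : S} (hj : isJoin a b j) (hm : idem m) (hmj : nle m j) :
    isJoin (a * m) (b * m) m := by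
  have := DistributiveInverseSemigroup.mul_distrib_right a b j m
    (compatible_of_nle_of_nle hj.1 hj.2.1) hj
  rwa [mul_eq_right_of_idem_nle hm hmj] at this

theorem isPrimeFilter_upClosure_compl {P : Order.Ideal (Idempotents S)} (hP : P.IsPrime) :
    IsPrimeFilter (upClosure (P : Set (Idempotents S))ᶜ) := by
  refine ⟨⟨isFilter_upClosure hP.compl_filter.toPFilter.nonempty
    (fun m hm n hn hmn => (hP.mem_or_mem hmn).elim hm hn),
    zero_notMem_upClosure (not_not.2 P.bot_mem)⟩, ?_⟩
  rintro a b j hj ⟨m, hm, hmj⟩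
  have hjm := isJoin_mul_of_idem_nle hj m.2 hmj
  let am : Idempotents S := ⟨a * m, idem_of_nle_idem m.2 hjm.1⟩
  let bm : Idempotents S := ⟨b * m, idem_of_nle_idem m.2 hjm.2.1⟩
  have hsup : am ⊔ bm = m := isJoin_iff_sup_eq.1 hjm
  rcases not_and_or.1 fun h => hm (hsup ▸ P.sup_mem h.1 h.2) with ha | hb
  · exact Or.inl ⟨am, ha, mul_nle_self_of_idem a m.2⟩
  · exact Or.inr ⟨bm, hb, mul_nle_self_of_idem b m.2⟩

theorem isBoolean_of_forall_isPrimeFilter_isUltrafilter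
    (hU : ∀ F : Set S, IsPrimeFilter F → IsUltrafilter F) : IsBoolean S := by
  refine isBoolean_iff.2 fun e f hef => ?_
  by_contra! hno
  obtain ⟨P, hP, heP, hfP, hPe⟩ := exists_isPrime_of_no_relCompl (α := Idempotents S) hef hno
  set M := (P : Set (Idempotents S))ᶜ
  have hF : IsPrimeFilter (upClosure M) := isPrimeFilter_upClosure_compl hP
  have hG : IsProperFilter (upClosure ((· ⊓ e) '' M)) := by
    refine ⟨isFilter_upClosure ⟨f ⊓ e, f, hfP, rfl⟩ ?_, zero_notMem_upClosure ?_⟩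
    · rintro _ ⟨m, hm, rfl⟩ _ ⟨n, hn, rfl⟩
      exact ⟨m ⊓ n, fun hmn => (hP.mem_or_mem hmn).elim hm hn, inf_inf_distrib_right m n e⟩
    · rintro ⟨m, hm, hme⟩
      exact hPe m hm (disjoint_iff.2 (inf_comm e m ▸ hme))
  have hFG : upClosure M ⊆ upClosure ((· ⊓ e) '' M) := fun _ ⟨m, hm, hms⟩ =>
    ⟨m ⊓ e, ⟨m, hm, rfl⟩, nle_trans_s8 (inf_le_left : m ⊓ e ≤ m) hms⟩
  have heG : (e : S) ∈ upClosure ((· ⊓ e) '' M) :=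
    ⟨f ⊓ e, ⟨f, hfP, rfl⟩, (inf_le_right : f ⊓ e ≤ e)⟩
  have heF : (e : S) ∉ upClosure M := fun ⟨m, hm, hme⟩ => hm (P.lower hme heP)
  exact heF ((hU _ hF).2 _ hG hFG ▸ heG)

end Distributive

/-- A distributive inverse semigroup is Boolean iff every prime filter
is an ultrafilter. -/
theorem stmt8 {S : Type*} [DistributiveInverseSemigroup S] :
    IsBoolean S ↔ ∀ F : Set S, IsPrimeFilter F → IsUltrafilter F :=
  ⟨fun hB _ hF => hF.isUltrafilter hB, isBoolean_of_forall_isPrimeFilter_isUltrafilter⟩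

end InvPaper
end

section
/- The set of local bisections of a (discrete) groupoid G, under subset multiplication AB = {ab : a ∈ A, b ∈ B, ab defined}, forms a Boolean inverse ∧-semigroup: it is an inverse semigroup with zero (the empty set), binary compatible joins given by union, binary meets given by intersection, and its idempotents (the subsets of identities) form a generalized Boolean algebra. -/
/-!
Everything rests on one observation: `x⁻¹y` (for `x, y` with a common source) is an identity
iff `x = y`, and dually for `xy⁻¹`. Hence a set is a local bisection iff source and target are
injective on it, and the closure properties (products, inverses, subsets, compatible unions)
become statements about injectivity. For regularity, `AA⁻¹` consists of identities, and
`x = (xx⁻¹)x`. An idempotent bisection `E = EE` consists of identities: if `z = xy` with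
`x, y ∈ E`, injectivity of source and target forces `z = x = y`, so `z = zz` and `z` is an
identity. Products of sets of identities are intersections, so idempotents commute.
-/

namespace InvPaper

open CategoryTheory

variable {C : Type*} [Groupoid C]

/-- The set of arrows of the groupoid with objects `C`. -/
abbrev GArr (C : Type*) [Groupoid C] := Σ a b : C, a ⟶ b

/-- Composition of arrows `x`, `y` given a proof they are composable. -/
def garrComp (x y : GArr C) (h : x.2.1 = y.1) : GArr C :=
  ⟨x.1, y.2.1, x.2.2 ≫ eqToHom h ≫ y.2.2⟩

/-- Subset multiplication: `AB = {xy : x ∈ A, y ∈ B, xy defined}`. -/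
def gSetMul (A B : Set (GArr C)) : Set (GArr C) :=
  {z | ∃ x ∈ A, ∃ y ∈ B, ∃ h : x.2.1 = y.1, z = garrComp x y h}

/-- Inversion of a subset: `A⁻¹ = {x⁻¹ : x ∈ A}`. -/
def gSetInv (A : Set (GArr C)) : Set (GArr C) :=
  {z | ∃ x ∈ A, z = ⟨x.2.1, x.1, Groupoid.inv x.2.2⟩}

/-- An arrow is an identity of the groupoid. -/
def IsIdentityArr (z : GArr C) : Prop := ∃ h : z.1 = z.2.1, z.2.2 = eqToHom h

/-- A local bisection: `A⁻¹A` and `AA⁻¹` consist only of identities. -/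
def IsLocalBisection (A : Set (GArr C)) : Prop :=
  (∀ z ∈ gSetMul (gSetInv A) A, IsIdentityArr z) ∧
    (∀ z ∈ gSetMul A (gSetInv A), IsIdentityArr z)

def garrInv (x : GArr C) : GArr C := ⟨x.2.1, x.1, Groupoid.inv x.2.2⟩

lemma isIdentityArr_mk_iff {a : C} (f : a ⟶ a) : IsIdentityArr (⟨a, a, f⟩ : GArr C) ↔ f = 𝟙 a :=
  ⟨fun ⟨_, h⟩ => by simpa using h, fun h => ⟨rfl, by simpa using h⟩⟩

lemma isIdentityArr_garrComp_garrInv_left_iff (x y : GArr C) (h : x.1 = y.1) :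
    IsIdentityArr (garrComp (garrInv x) y h) ↔ x = y := by
  obtain ⟨a, b, f⟩ := x
  obtain ⟨a', c, g⟩ := y
  obtain rfl : a = a' := h
  constructor
  · rintro ⟨rfl : b = c, hfg⟩
    obtain rfl : g = f := by simpa [garrComp, garrInv, inv_comp_eq_id] using hfg
    rfl
  · rintro ⟨⟩
    exact (isIdentityArr_mk_iff _).2 (by simp [garrInv])

lemma isIdentityArr_garrComp_garrInv_right_iff (x y : GArr C) (h : x.2.1 = y.2.1) :
    IsIdentityArr (garrComp x (garrInv y) h) ↔ x = y := by
  obtain ⟨a, b, f⟩ := x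
  obtain ⟨c, b', g⟩ := y
  obtain rfl : b = b' := h
  constructor
  · rintro ⟨rfl : a = c, hfg⟩
    obtain rfl : f = g := by simpa [garrComp, garrInv, comp_inv_eq_id] using hfg
    rfl
  · rintro ⟨⟩
    exact (isIdentityArr_mk_iff _).2 (by simp [garrInv])

lemma forall_isIdentityArr_gSetMul_gSetInv_left_iff {A B : Set (GArr C)} :
    (∀ z ∈ gSetMul (gSetInv A) B, IsIdentityArr z) ↔
      ∀ x ∈ A, ∀ y ∈ B, x.1 = y.1 → x = y := by
  constructor
  · intro h x hx y hy hxy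
    exact (isIdentityArr_garrComp_garrInv_left_iff x y hxy).1
      (h _ ⟨_, ⟨x, hx, rfl⟩, y, hy, hxy, rfl⟩)
  · rintro h _ ⟨_, ⟨x, hx, rfl⟩, y, hy, hxy, rfl⟩
    exact (isIdentityArr_garrComp_garrInv_left_iff x y hxy).2 (h x hx y hy hxy)

lemma forall_isIdentityArr_gSetMul_gSetInv_right_iff {A B : Set (GArr C)} :
    (∀ z ∈ gSetMul A (gSetInv B), IsIdentityArr z) ↔
      ∀ x ∈ A, ∀ y ∈ B, x.2.1 = y.2.1 → x = y := by
  constructor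
  · intro h x hx y hy hxy
    exact (isIdentityArr_garrComp_garrInv_right_iff x y hxy).1
      (h _ ⟨x, hx, _, ⟨y, hy, rfl⟩, hxy, rfl⟩)
  · rintro h _ ⟨x, hx, _, ⟨y, hy, rfl⟩, hxy, rfl⟩
    exact (isIdentityArr_garrComp_garrInv_right_iff x y hxy).2 (h x hx y hy hxy)

lemma isLocalBisection_iff {A : Set (GArr C)} :
    IsLocalBisection A ↔
      (∀ x ∈ A, ∀ y ∈ A, x.1 = y.1 → x = y) ∧ ∀ x ∈ A, ∀ y ∈ A, x.2.1 = y.2.1 → x = y :=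
  and_congr forall_isIdentityArr_gSetMul_gSetInv_left_iff
    forall_isIdentityArr_gSetMul_gSetInv_right_iff

lemma isLocalBisection_empty : IsLocalBisection (∅ : Set (GArr C)) := by
  simp [isLocalBisection_iff]

lemma IsLocalBisection.mono {A B : Set (GArr C)} (hA : IsLocalBisection A) (hBA : B ⊆ A) :
    IsLocalBisection B := by
  rw [isLocalBisection_iff] at hA ⊢
  exact ⟨fun x hx y hy => hA.1 x (hBA hx) y (hBA hy), fun x hx y hy => hA.2 x (hBA hx) y (hBA hy)⟩

lemma IsLocalBisection.mul {A B : Set (GArr C)} (hA : IsLocalBisection A)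
    (hB : IsLocalBisection B) : IsLocalBisection (gSetMul A B) := by
  rw [isLocalBisection_iff] at hA hB ⊢
  constructor
  · rintro _ ⟨x, hx, y, hy, hxy, rfl⟩ _ ⟨x', hx', y', hy', hxy', rfl⟩ hsrc
    obtain rfl := hA.1 x hx x' hx' hsrc
    obtain rfl := hB.1 y hy y' hy' (hxy.symm.trans hxy')
    rfl
  · rintro _ ⟨x, hx, y, hy, hxy, rfl⟩ _ ⟨x', hx', y', hy', hxy', rfl⟩ htgt
    obtain rfl := hB.2 y hy y' hy' htgt
    obtain rfl := hA.2 x hx x' hx' (hxy.trans hxy'.symm)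
    rfl

lemma IsLocalBisection.inv {A : Set (GArr C)} (hA : IsLocalBisection A) :
    IsLocalBisection (gSetInv A) := by
  rw [isLocalBisection_iff] at hA ⊢
  constructor
  · rintro _ ⟨x, hx, rfl⟩ _ ⟨y, hy, rfl⟩ h
    rw [hA.2 x hx y hy h]
  · rintro _ ⟨x, hx, rfl⟩ _ ⟨y, hy, rfl⟩ h
    rw [hA.1 x hx y hy h]

lemma IsLocalBisection.union {A B : Set (GArr C)} (hA : IsLocalBisection A)
    (hB : IsLocalBisection B) (hAB : ∀ z ∈ gSetMul (gSetInv A) B, IsIdentityArr z)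
    (hAB' : ∀ z ∈ gSetMul A (gSetInv B), IsIdentityArr z) : IsLocalBisection (A ∪ B) := by
  rw [isLocalBisection_iff] at hA hB ⊢
  rw [forall_isIdentityArr_gSetMul_gSetInv_left_iff] at hAB
  rw [forall_isIdentityArr_gSetMul_gSetInv_right_iff] at hAB'
  constructor
  · rintro x (hx | hx) y (hy | hy) h
    · exact hA.1 x hx y hy h
    · exact hAB x hx y hy h
    · exact (hAB y hy x hx h.symm).symm
    · exact hB.1 x hx y hy h
  · rintro x (hx | hx) y (hy | hy) h
    · exact hA.2 x hx y hy h
    · exact hAB' x hx y hy h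
    · exact (hAB' y hy x hx h.symm).symm
    · exact hB.2 x hx y hy h

lemma garrInv_garrInv (x : GArr C) : garrInv (garrInv x) = x := by
  obtain ⟨a, b, f⟩ := x
  simp [garrInv]

lemma gSetInv_gSetInv (A : Set (GArr C)) : gSetInv (gSetInv A) = A := by
  ext z
  constructor
  · rintro ⟨_, ⟨x, hx, rfl⟩, rfl⟩
    show garrInv (garrInv x) ∈ A
    rwa [garrInv_garrInv]
  · intro hz
    exact ⟨garrInv z, ⟨z, hz, rfl⟩, (garrInv_garrInv z).symm⟩

lemma garrComp_assoc (x y z : GArr C) (h : x.2.1 = y.1) (h' : y.2.1 = z.1) :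
    garrComp (garrComp x y h) z h' = garrComp x (garrComp y z h') h := by
  obtain ⟨a, b, f⟩ := x
  obtain ⟨b', c, g⟩ := y
  obtain ⟨c', d, k⟩ := z
  cases h
  cases h'
  simp [garrComp]

lemma gSetMul_assoc (A B D : Set (GArr C)) :
    gSetMul (gSetMul A B) D = gSetMul A (gSetMul B D) := by
  ext z
  constructor
  · rintro ⟨_, ⟨x, hx, y, hy, h, rfl⟩, w, hw, h', rfl⟩
    exact ⟨x, hx, _, ⟨y, hy, w, hw, h', rfl⟩, h, garrComp_assoc x y w h h'⟩
  · rintro ⟨x, hx, _, ⟨y, hy, w, hw, h', rfl⟩, h, rfl⟩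
    exact ⟨_, ⟨x, hx, y, hy, h, rfl⟩, w, hw, h', (garrComp_assoc x y w h h').symm⟩

lemma gSetMul_empty_left (A : Set (GArr C)) : gSetMul ∅ A = ∅ := by
  ext
  simp [gSetMul]

lemma gSetMul_empty_right (A : Set (GArr C)) : gSetMul A ∅ = ∅ := by
  ext
  simp [gSetMul]

lemma garrComp_of_isIdentityArr_left {w : GArr C} (hw : IsIdentityArr w) (z : GArr C)
    (h : w.2.1 = z.1) : garrComp w z h = z := by
  obtain ⟨a, b, e⟩ := w
  obtain rfl : a = b := hw.1
  obtain rfl : e = 𝟙 a := (isIdentityArr_mk_iff e).1 hw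
  obtain ⟨_, c, g⟩ := z
  cases h
  simp [garrComp]

lemma garrComp_of_isIdentityArr_right (z : GArr C) {w : GArr C} (hw : IsIdentityArr w)
    (h : z.2.1 = w.1) : garrComp z w h = z := by
  obtain ⟨a, b, e⟩ := w
  obtain rfl : a = b := hw.1
  obtain rfl : e = 𝟙 a := (isIdentityArr_mk_iff e).1 hw
  obtain ⟨c, _, g⟩ := z
  cases h
  simp [garrComp]

lemma IsLocalBisection.mul_inv_mul_self {A : Set (GArr C)} (hA : IsLocalBisection A) :
    gSetMul (gSetMul A (gSetInv A)) A = A := by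
  ext x
  constructor
  · rintro ⟨w, hw, y, hy, h, rfl⟩
    rwa [garrComp_of_isIdentityArr_left (hA.2 w hw)]
  · intro hx
    have hxx : IsIdentityArr (garrComp x (garrInv x) rfl) :=
      (isIdentityArr_garrComp_garrInv_right_iff x x rfl).2 rfl
    exact ⟨_, ⟨x, hx, _, ⟨x, hx, rfl⟩, rfl, rfl⟩, x, hx, rfl,
      (garrComp_of_isIdentityArr_left hxx x rfl).symm⟩

lemma IsLocalBisection.inv_mul_inv_self {A : Set (GArr C)} (hA : IsLocalBisection A) :
    gSetMul (gSetMul (gSetInv A) A) (gSetInv A) = gSetInv A := by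
  simpa only [gSetInv_gSetInv] using hA.inv.mul_inv_mul_self

lemma isIdentityArr_of_garrComp_self_eq {x : GArr C} (h : x.2.1 = x.1)
    (hx : garrComp x x h = x) : IsIdentityArr x := by
  obtain ⟨a, b, f⟩ := x
  obtain rfl : b = a := h
  have hff : f ≫ f = f ≫ 𝟙 _ := by simpa [garrComp] using hx
  exact (isIdentityArr_mk_iff f).2 (cancel_epi f |>.1 hff)

lemma IsLocalBisection.forall_isIdentityArr_of_gSetMul_self_eq {E : Set (GArr C)}
    (hE : IsLocalBisection E) (hEE : gSetMul E E = E) : ∀ z ∈ E, IsIdentityArr z := by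
  rw [isLocalBisection_iff] at hE
  intro z hz
  obtain ⟨x, hx, y, hy, hxy, hzxy⟩ := hEE.symm ▸ hz
  obtain rfl : z = x := hE.1 z hz x hx (by rw [hzxy]; rfl)
  obtain rfl : z = y := hE.2 z hz y hy (by rw [hzxy]; rfl)
  exact isIdentityArr_of_garrComp_self_eq hxy hzxy.symm

lemma gSetMul_eq_inter_of_isIdentityArr {E F : Set (GArr C)} (hE : ∀ z ∈ E, IsIdentityArr z)
    (hF : ∀ z ∈ F, IsIdentityArr z) : gSetMul E F = E ∩ F := by
  ext z
  constructor
  · rintro ⟨x, hx, y, hy, h, rfl⟩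
    have hyx : y = x := (garrComp_of_isIdentityArr_left (hE x hx) y h).symm.trans
      (garrComp_of_isIdentityArr_right x (hF y hy) h)
    rw [garrComp_of_isIdentityArr_left (hE x hx)]
    exact ⟨hyx ▸ hx, hy⟩
  · rintro ⟨hzE, hzF⟩
    exact ⟨z, hzE, z, hzF, (hE z hzE).1.symm,
      (garrComp_of_isIdentityArr_left (hE z hzE) z _).symm⟩

/-- The local bisections of a (discrete) groupoid form a Boolean
inverse ∧-semigroup under subset multiplication: they are closed under products and
inverses, form an inverse semigroup with zero `∅` (idempotents commuting), binary
compatible joins are given by union, binary meets by intersection, and the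
idempotents (subsets of identities) form a generalized Boolean algebra
(relative complements exist, given by set difference). -/
theorem stmt13 :
    -- closure under multiplication and inversion
    (∀ A B : Set (GArr C), IsLocalBisection A → IsLocalBisection B →
      IsLocalBisection (gSetMul A B)) ∧
    (∀ A : Set (GArr C), IsLocalBisection A → IsLocalBisection (gSetInv A)) ∧
    -- associativity of subset multiplication
    (∀ A B D : Set (GArr C), gSetMul (gSetMul A B) D = gSetMul A (gSetMul B D)) ∧
    -- regularity: A A⁻¹ A = A and A⁻¹ A A⁻¹ = A⁻¹
    (∀ A : Set (GArr C), IsLocalBisection A →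
      gSetMul (gSetMul A (gSetInv A)) A = A ∧
      gSetMul (gSetMul (gSetInv A) A) (gSetInv A) = gSetInv A) ∧
    -- idempotents commute (inverse semigroup)
    (∀ E F : Set (GArr C), IsLocalBisection E → IsLocalBisection F →
      gSetMul E E = E → gSetMul F F = F → gSetMul E F = gSetMul F E) ∧
    -- the empty set is a local bisection and is a zero
    IsLocalBisection (∅ : Set (GArr C)) ∧
    (∀ A : Set (GArr C), gSetMul ∅ A = ∅ ∧ gSetMul A ∅ = ∅) ∧
    -- binary compatible joins are given by union
    (∀ A B : Set (GArr C), IsLocalBisection A → IsLocalBisection B →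
      (∀ z ∈ gSetMul (gSetInv A) B, IsIdentityArr z) →
      (∀ z ∈ gSetMul A (gSetInv B), IsIdentityArr z) →
      IsLocalBisection (A ∪ B)) ∧
    -- binary meets are given by intersection
    (∀ A B : Set (GArr C), IsLocalBisection A → IsLocalBisection B →
      IsLocalBisection (A ∩ B)) ∧
    -- the idempotents (sets of identities) form a generalized Boolean algebra
    (∀ A B : Set (GArr C), IsLocalBisection A → IsLocalBisection B →
      (∀ z ∈ A, IsIdentityArr z) → (∀ z ∈ B, IsIdentityArr z) → A ⊆ B →
      IsLocalBisection (B \ A) ∧ (∀ z ∈ B \ A, IsIdentityArr z) ∧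
        A ∪ (B \ A) = B ∧ A ∩ (B \ A) = ∅) := by
  refine ⟨fun _ _ hA hB => hA.mul hB, fun _ hA => hA.inv, gSetMul_assoc,
    fun _ hA => ⟨hA.mul_inv_mul_self, hA.inv_mul_inv_self⟩, ?_, isLocalBisection_empty,
    fun A => ⟨gSetMul_empty_left A, gSetMul_empty_right A⟩,
    fun _ _ hA hB => hA.union hB, fun _ _ hA _ => hA.mono Set.inter_subset_left, ?_⟩
  · intro E F hE hF hEE hFF
    have hEid := hE.forall_isIdentityArr_of_gSetMul_self_eq hEE
    have hFid := hF.forall_isIdentityArr_of_gSetMul_self_eq hFF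
    rw [gSetMul_eq_inter_of_isIdentityArr hEid hFid, gSetMul_eq_inter_of_isIdentityArr hFid hEid,
      Set.inter_comm]
  · intro A B _ hB _ hBid hAB
    exact ⟨hB.mono Set.sdiff_subset, fun z hz => hBid z hz.1, Set.union_sdiff_cancel hAB,
      Set.inter_sdiff_self A B⟩

end InvPaper
end
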